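/- Let G = (V,E) be a finite simple graph and s : V → Bool. Then the configuration s is stable (no vertex satisfies the Candidacy guard or the Withdrawal guard) if and only if β(s) is a maximal independent set of G. -/

import Mathlib

def beta {V : Type*} (G : SimpleGraph V) (s : V → Bool) : Set V :=
  {u | s u = true ∧ ∀ v, G.Adj u v → s v = false}

/-! A stable configuration makes `beta G s` exactly the set of vertices with value `⊤`: a `⊤` vertex
that is not in `beta G s` could withdraw, and a `⊥` vertex without a `⊤` neighbour could become a
candidate. Conversely, once `beta G s` dominates the graph, every vertex outside it is forced to `⊥`
by its neighbour in `beta G s`, so `beta G s` is again the set of `⊤` vertices and no guard is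
enabled. -/

section

variable {V : Type*} {G : SimpleGraph V} {s : V → Bool} {u v : V}

lemma eq_false_of_mem_beta_of_adj (hu : u ∈ beta G s) (huv : G.Adj u v) : s v = false :=
  hu.2 v huv

lemma not_adj_of_mem_beta (hu : u ∈ beta G s) (hv : v ∈ beta G s) : ¬ G.Adj u v := fun huv => by
  simpa [hv.1] using eq_false_of_mem_beta_of_adj hu huv

lemma mem_beta_of_not_withdrawal (hu : s u = true)
    (hw : ¬ (s u = true ∧ ∃ v, G.Adj u v ∧ s v = true)) : u ∈ beta G s := by
  simp only [hu, true_and, not_exists, not_and, Bool.not_eq_true] at hw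
  exact ⟨hu, hw⟩

lemma exists_adj_mem_beta_of_stable
    (hstable : ∀ u : V,
      ¬ (s u = false ∧ ∀ v, G.Adj u v → s v = false) ∧
      ¬ (s u = true ∧ ∃ v, G.Adj u v ∧ s v = true))
    (hu : u ∉ beta G s) : ∃ v ∈ beta G s, G.Adj u v := by
  have hu_false : s u = false := by
    by_contra hne
    exact hu (mem_beta_of_not_withdrawal (by simpa using hne) (hstable u).2)
  obtain ⟨v, huv, hv⟩ : ∃ v, G.Adj u v ∧ s v = true := by
    simpa [hu_false] using (hstable u).1
  exact ⟨v, mem_beta_of_not_withdrawal hv (hstable v).2, huv⟩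

lemma eq_true_iff_mem_beta_of_dominating
    (hdom : ∀ w : V, w ∉ beta G s → ∃ v ∈ beta G s, G.Adj w v) :
    s u = true ↔ u ∈ beta G s := by
  refine ⟨fun hu => ?_, fun hu => hu.1⟩
  by_contra hnot
  obtain ⟨v, hv, hvu⟩ := hdom u hnot
  simp [eq_false_of_mem_beta_of_adj hv hvu.symm] at hu

end

theorem stmt_8_general {V : Type*} (G : SimpleGraph V) (s : V → Bool) :
    (∀ u : V,
      ¬ (s u = false ∧ ∀ v, G.Adj u v → s v = false) ∧
      ¬ (s u = true ∧ ∃ v, G.Adj u v ∧ s v = true)) ↔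
    ((∀ u ∈ beta G s, ∀ v ∈ beta G s, ¬ G.Adj u v) ∧
     (∀ w : V, w ∉ beta G s → ∃ v ∈ beta G s, G.Adj w v)) := by
  refine ⟨fun hstable => ⟨fun u hu v hv => not_adj_of_mem_beta hu hv,
    fun w hw => exists_adj_mem_beta_of_stable hstable hw⟩, ?_⟩
  rintro ⟨-, hdom⟩ u
  have htrue {w : V} := eq_true_iff_mem_beta_of_dominating (u := w) hdom
  constructor
  · rintro ⟨hu, hall⟩
    obtain ⟨v, hv, huv⟩ := hdom u (by simp [← htrue, hu])
    simpa [htrue.mpr hv] using hall v huv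
  · rintro ⟨hu, v, huv, hv⟩
    exact not_adj_of_mem_beta (htrue.mp hu) (htrue.mp hv) huv

theorem stmt_8 {V : Type*} [Fintype V] (G : SimpleGraph V) (s : V → Bool) :
    (∀ u : V,
      ¬ (s u = false ∧ ∀ v, G.Adj u v → s v = false) ∧
      ¬ (s u = true ∧ ∃ v, G.Adj u v ∧ s v = true)) ↔
    ((∀ u ∈ beta G s, ∀ v ∈ beta G s, ¬ G.Adj u v) ∧
     (∀ w : V, w ∉ beta G s → ∃ v ∈ beta G s, G.Adj w v)) :=
  stmt_8_general G s
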